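/- A* with delayed duplicate detection and an admissible static heuristic returns optimal solutions: if the dynamic heuristic used by dynA* is independent of the information object, i.e., h(s,i) = h₀(s) for a static heuristic h₀ with h₀(s) ≤ h*(s) for all states s, then any path returned by dynA* is a solution of minimum cost h*(s_I). -/

import Mathlib

open scoped ENNReal Classical

/-! ## Transition systems -/

/-- A labeled transition: (origin, label, target). -/
abbrev Tran (S L : Type) := S × L × S

/-- A transition system with states `S`, labels `L`, a cost function,
a set of labeled transitions, an initial state and a set of goal states. -/
structure TransSys (S L : Type) where
  cost : L → NNReal
  trans : Set (Tran S L)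
  init : S
  goal : Set S

namespace TransSys

variable {S L : Type}

/-- `IsPathFrom ts s π s'`: `π` is a path from `s` to `s'` in `ts`. -/
inductive IsPathFrom (ts : TransSys S L) : S → List (Tran S L) → S → Prop
  | nil (s : S) : IsPathFrom ts s [] s
  | cons {s m e : S} {l : L} {π : List (Tran S L)} :
      (s, l, m) ∈ ts.trans → IsPathFrom ts m π e → IsPathFrom ts s ((s, l, m) :: π) e

/-- The cost of a path: sum of the costs of its labels. -/
def pathCost (ts : TransSys S L) (π : List (Tran S L)) : NNReal :=
  (π.map fun t => ts.cost t.2.1).sum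

/-- A state is reachable if there is a path from the initial state to it. -/
def Reachable (ts : TransSys S L) (s : S) : Prop := ∃ π, ts.IsPathFrom ts.init π s

/-- A solution is a path from the initial state to a goal state. -/
def Solution (ts : TransSys S L) (π : List (Tran S L)) : Prop :=
  ∃ s ∈ ts.goal, ts.IsPathFrom ts.init π s

def Solvable (ts : TransSys S L) : Prop := ∃ π, ts.Solution π

/-- `h*`: minimal cost of a path from `s` to a goal state (`∞` if none exists). -/
noncomputable def hstar (ts : TransSys S L) (s : S) : ℝ≥0∞ :=
  sInf {x : ℝ≥0∞ | ∃ π, ∃ g ∈ ts.goal, ts.IsPathFrom s π g ∧ x = (ts.pathCost π : ℝ≥0∞)}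

/-- `g*`: minimal cost of a path from the initial state to `s` (`∞` if none exists). -/
noncomputable def gstar (ts : TransSys S L) (s : S) : ℝ≥0∞ :=
  sInf {x : ℝ≥0∞ | ∃ π, ts.IsPathFrom ts.init π s ∧ x = (ts.pathCost π : ℝ≥0∞)}

end TransSys

/-! ## Information sources and dynamic heuristics -/

/-- An information source for a transition system (Definition 1). -/
structure InfoSource {S L : Type} (ts : TransSys S L) (I : Type) where
  initInfo : I
  update : I → Tran S L → I
  refine : I → S → I

namespace InfoSource

variable {S L I : Type} {ts : TransSys S L}

/-- `ReachWith σ i K`: information object `i` is obtained from the initial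
information by updates/refinements, where `K` is the set consisting of the
initial state together with all targets of used transitions, every refined state
lies in `K`, and the origin of every used transition lies in `K` (Definition 2). -/
inductive ReachWith (σ : InfoSource ts I) : I → Set S → Prop
  | base : ReachWith σ σ.initInfo {ts.init}
  | update {i : I} {K : Set S} {t : Tran S L} :
      ReachWith σ i K → t ∈ ts.trans → t.1 ∈ K →
      ReachWith σ (σ.update i t) (insert t.2.2 K)
  | refine {i : I} {K : Set S} {s : S} :
      ReachWith σ i K → s ∈ K → ReachWith σ (σ.refine i s) K

/-- An information object is reachable (Definition 2). -/
def ReachableInfo (σ : InfoSource ts I) (i : I) : Prop := ∃ K, σ.ReachWith i K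

end InfoSource

section HeuristicProps

variable {S L I : Type} (ts : TransSys S L) (σ : InfoSource ts I) (h : S → I → ℝ≥0∞)

def DynSafe : Prop := ∀ (s : S) (i : I), σ.ReachableInfo i → h s i = ⊤ → ts.hstar s = ⊤

def DynAdmissible : Prop := ∀ (s : S) (i : I), σ.ReachableInfo i → h s i ≤ ts.hstar s

def DynConsistent : Prop :=
  ∀ t ∈ ts.trans, ∀ i : I, σ.ReachableInfo i →
    h t.1 i ≤ (ts.cost t.2.1 : ℝ≥0∞) + h t.2.2 i

def DynGoalAware : Prop := ∀ s ∈ ts.goal, ∀ i : I, σ.ReachableInfo i → h s i = 0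

def DynMonotonic : Prop :=
  ∀ i : I, σ.ReachableInfo i →
    (∀ s : S, ∀ t ∈ ts.trans, h s i ≤ h s (σ.update i t)) ∧
    (∀ s s' : S, h s i ≤ h s (σ.refine i s'))

end HeuristicProps

/-! ## Progression sources -/

/-- A progression source (Definition 5). -/
structure ProgSource {S L : Type} (ts : TransSys S L) (J : Type) where
  initJ : J
  progress : J → Tran S L → J
  merge : J → J → J

/-- The progression-based information source built on a progression source
(Definition 7): per-state information, updated by progressing along a
transition and merging with existing information at the target. -/
noncomputable def progInfoSource {S L J : Type} (ts : TransSys S L) (p : ProgSource ts J) :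
    InfoSource ts (S → Option J) where
  initInfo := fun x => if x = ts.init then some p.initJ else none
  update := fun i t => fun x =>
    if x = t.2.2 then
      match i t.1 with
      | none => i t.2.2
      | some j =>
        match i t.2.2 with
        | none => some (p.progress j t)
        | some j' => some (p.merge (p.progress j t) j')
    else i x
  refine := fun i _ => i

/-- The parent source (Definition 6): per-state `g`-values and parent pointers. -/
noncomputable def parentSource {S L : Type} (ts : TransSys S L) :
    ProgSource ts (NNReal × Option (Tran S L)) where
  initJ := (0, none)
  progress := fun j t => (j.1 + ts.cost t.2.1, some t)
  merge := fun a b => if a.1 ≤ b.1 then a else b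

/-- `ParentChain par s π`: `π` is the sequence of transitions obtained by
following parent pointers backwards from `s` until a state whose stored
pointer is `⊥` (read forwards). -/
inductive ParentChain {S L : Type} (par : S → Option (NNReal × Option (Tran S L))) :
    S → List (Tran S L) → Prop
  | nil {s : S} {g : NNReal} : par s = some (g, none) → ParentChain par s []
  | cons {g : NNReal} {t : Tran S L} {π : List (Tran S L)} :
      par t.2.2 = some (g, some t) → ParentChain par t.1 π →
      ParentChain par t.2.2 (π ++ [t])

/-! ## The dynamic heuristic search framework (Algorithm 1) -/

/-- A configuration of the framework: the known states and one information
object per information source. -/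
structure FConfig (S : Type) {ι : Type} (I : ι → Type) where
  known : Set S
  infos : ∀ k, I k

/-- The (non-terminating) operations of the framework. -/
inductive FOp where
  | genUnknown
  | genKnown
  | refineOp
deriving DecidableEq

section Framework

variable {S L ι : Type} {I : ι → Type} (ts : TransSys S L) (σ : ∀ k, InfoSource ts (I k))

/-- One step of the framework, labeled by the operation performed. -/
inductive FStep : FConfig S I → FOp → FConfig S I → Prop
  | genUnknown {c : FConfig S I} {t : Tran S L} :
      t ∈ ts.trans → t.1 ∈ c.known → t.2.2 ∉ c.known →
      FStep c .genUnknown ⟨insert t.2.2 c.known, fun k => (σ k).update (c.infos k) t⟩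
  | genKnown {c : FConfig S I} {t : Tran S L} :
      t ∈ ts.trans → t.1 ∈ c.known → t.2.2 ∈ c.known →
      FStep c .genKnown ⟨c.known, fun k => (σ k).update (c.infos k) t⟩
  | refineStep {c : FConfig S I} {s : S} :
      s ∈ c.known →
      FStep c .refineOp ⟨c.known, fun k => (σ k).refine (c.infos k) s⟩

/-- The initial configuration of the framework. -/
def initFConfig : FConfig S I := ⟨{ts.init}, fun k => (σ k).initInfo⟩

/-- A configuration occurring in some finite execution of the framework. -/
def FReach (c : FConfig S I) : Prop :=
  Relation.ReflTransGen (fun a b => ∃ op, FStep ts σ a op b) (initFConfig ts σ) c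

/-- Applicability of the gen-unknown operation. -/
def GenUnknownApp (c : FConfig S I) : Prop :=
  ∃ t ∈ ts.trans, t.1 ∈ c.known ∧ t.2.2 ∉ c.known

/-- Applicability of decl-solvable: a goal state is known. -/
def DeclSolvableApp (c : FConfig S I) : Prop := ∃ s ∈ c.known, s ∈ ts.goal

/-- Applicability of decl-unsolvable: no goal state is known and
no transition leaves the known states. -/
def DeclUnsolvableApp (c : FConfig S I) : Prop :=
  (∀ s ∈ c.known, s ∉ ts.goal) ∧ ¬ GenUnknownApp ts c

end Framework

/-! ## dynA* (Algorithm 2) -/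

/-- An open-list entry: (state, g-entry, h-entry). -/
abbrev Entry (S : Type) := S × NNReal × ℝ≥0∞

/-- The f-value of an open-list entry. -/
noncomputable def fval {S : Type} (en : Entry S) : ℝ≥0∞ := (en.2.1 : ℝ≥0∞) + en.2.2

/-- A configuration of dynA*: known states, closed set, open queue, the parent
information (g-values and parent pointers, i.e. the information of σ_p) and the
information object of the heuristic's source σ_h. -/
structure AConfig (S L I : Type) where
  known : Set S
  closed : Set S
  openq : Multiset (Entry S)
  par : S → Option (NNReal × Option (Tran S L))
  info : I

/-- The g-value currently stored for a state. -/
noncomputable def gOf {S L I : Type} (c : AConfig S L I) (s : S) : NNReal :=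
  ((c.par s).map Prod.fst).getD 0

section DynAStar

variable {S L I : Type} (ts : TransSys S L) (σh : InfoSource ts I) (h : S → I → ℝ≥0∞)

/-- Updating the parent information along a transition `t` (the update of the
progression-based parent source σ_p): the target's pair becomes
`(g(origin)+cost, t)` unless the previously stored g-value is smaller. -/
noncomputable def parUpd (par : S → Option (NNReal × Option (Tran S L))) (t : Tran S L) :
    S → Option (NNReal × Option (Tran S L)) := fun x =>
  if x = t.2.2 then
    match par t.1 with
    | none => par t.2.2
    | some (g, _) =>
      match par t.2.2 with
      | none => some (g + ts.cost t.2.1, some t)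
      | some (g', p') =>
          if g + ts.cost t.2.1 ≤ g' then some (g + ts.cost t.2.1, some t)
          else some (g', p')
  else par x

/-- Processing one successor transition `t = (s, ℓ, s')` during the expansion of
`s`: record the old g-value (undefined iff `s'` unknown), update both information
objects along `t`, add `s'` to the known states, and insert `(s', g(s'), h(s'))`
into the open queue if `h(s') < ∞` and `s'` is new or reached more cheaply
(removing `s'` from closed in the latter case: reopening). -/
noncomputable def procSucc (c : AConfig S L I) (t : Tran S L) : AConfig S L I :=
  let oldg : Option NNReal := if t.2.2 ∈ c.known then some (gOf c t.2.2) else none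
  let par' := parUpd ts c.par t
  let info' := σh.update c.info t
  let c' : AConfig S L I :=
    { known := insert t.2.2 c.known, closed := c.closed, openq := c.openq,
      par := par', info := info' }
  let gnew : NNReal := ((par' t.2.2).map Prod.fst).getD 0
  let hnew : ℝ≥0∞ := h t.2.2 info'
  if hnew = ⊤ then c'
  else
    match oldg with
    | none => { c' with openq := (t.2.2, gnew, hnew) ::ₘ c.openq }
    | some go =>
      if gnew < go then
        { c' with closed := c.closed \ {t.2.2},
                  openq := (t.2.2, gnew, hnew) ::ₘ c.openq }
      else c'

/-- Expanding a state: process all its successor transitions in order. -/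
noncomputable def expandAll (c : AConfig S L I) (l : List (Tran S L)) : AConfig S L I :=
  l.foldl (procSucc ts σh h) c

/-- `l` enumerates (without repetition) exactly the transitions with origin `s`. -/
def SuccList (s : S) (l : List (Tran S L)) : Prop :=
  l.Nodup ∧ ∀ t : Tran S L, t ∈ l ↔ t ∈ ts.trans ∧ t.1 = s

/-- Labels recording what happened in one iteration of dynA*. -/
inductive ALab (S L : Type) where
  | dup (en : Entry S)
  | reev (en : Entry S)
  | expand (en : Entry S)
  | retGoal (en : Entry S) (π : List (Tran S L))
  | unsolv

/-- The entry popped from the open queue in an iteration, if any. -/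
def popped {S L : Type} : ALab S L → Option (Entry S)
  | .dup en => some en
  | .reev en => some en
  | .expand en => some en
  | .retGoal en _ => some en
  | .unsolv => none

/-- The outcome of one iteration of dynA*. -/
inductive AOut (S L I : Type) where
  | cont (c : AConfig S L I)
  | retPath (π : List (Tran S L))
  | unsolvable

/-- One iteration of dynA* (Algorithm 2), with optional re-evaluation.
An entry of minimal f-value is popped; duplicates (closed states) are discarded;
otherwise both information objects are refined on the popped state (σ_p's refine
is the identity, so `par` is unchanged); with `reeval` set, a state whose
heuristic value increased is re-inserted instead of expanded; expanding a goal
state returns the path obtained by following parent pointers; expanding a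
non-goal state processes all its successor transitions. If the open queue is
empty, 'unsolvable' is returned. -/
inductive AStep (reeval : Bool) : AConfig S L I → ALab S L → AOut S L I → Prop
  | dup {c : AConfig S L I} {en : Entry S} {rest : Multiset (Entry S)} :
      c.openq = en ::ₘ rest → (∀ en' ∈ c.openq, fval en ≤ fval en') →
      en.1 ∈ c.closed →
      AStep reeval c (.dup en) (.cont { c with openq := rest })
  | reevFin {c : AConfig S L I} {en : Entry S} {rest : Multiset (Entry S)} :
      c.openq = en ::ₘ rest → (∀ en' ∈ c.openq, fval en ≤ fval en') →
      en.1 ∉ c.closed → reeval = true →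
      en.2.2 < h en.1 (σh.refine c.info en.1) →
      h en.1 (σh.refine c.info en.1) ≠ ⊤ →
      AStep reeval c (.reev en)
        (.cont { c with info := σh.refine c.info en.1,
                        openq := (en.1, gOf c en.1, h en.1 (σh.refine c.info en.1)) ::ₘ rest })
  | reevInf {c : AConfig S L I} {en : Entry S} {rest : Multiset (Entry S)} :
      c.openq = en ::ₘ rest → (∀ en' ∈ c.openq, fval en ≤ fval en') →
      en.1 ∉ c.closed → reeval = true →
      en.2.2 < h en.1 (σh.refine c.info en.1) →
      h en.1 (σh.refine c.info en.1) = ⊤ →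
      AStep reeval c (.reev en)
        (.cont { c with info := σh.refine c.info en.1, openq := rest })
  | retGoal {c : AConfig S L I} {en : Entry S} {rest : Multiset (Entry S)}
      {π : List (Tran S L)} :
      c.openq = en ::ₘ rest → (∀ en' ∈ c.openq, fval en ≤ fval en') →
      en.1 ∉ c.closed →
      ¬(reeval = true ∧ en.2.2 < h en.1 (σh.refine c.info en.1)) →
      en.1 ∈ ts.goal → ParentChain c.par en.1 π →
      AStep reeval c (.retGoal en π) (.retPath π)
  | expand {c : AConfig S L I} {en : Entry S} {rest : Multiset (Entry S)}
      {l : List (Tran S L)} :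
      c.openq = en ::ₘ rest → (∀ en' ∈ c.openq, fval en ≤ fval en') →
      en.1 ∉ c.closed →
      ¬(reeval = true ∧ en.2.2 < h en.1 (σh.refine c.info en.1)) →
      en.1 ∉ ts.goal → SuccList ts en.1 l →
      AStep reeval c (.expand en)
        (.cont (expandAll ts σh h
          { c with openq := rest, closed := insert en.1 c.closed,
                   info := σh.refine c.info en.1 } l))
  | unsolv {c : AConfig S L I} :
      c.openq = 0 → AStep reeval c .unsolv .unsolvable

/-- The initial configuration of dynA*. -/
noncomputable def initAConfig : AConfig S L I where
  known := {ts.init}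
  closed := ∅
  openq :=
    if h ts.init σh.initInfo = ⊤ then 0 else {(ts.init, 0, h ts.init σh.initInfo)}
  par := fun x => if x = ts.init then some (0, none) else none
  info := σh.initInfo

/-- `IsExec ts σh h reeval e lab N`: `e 0, …, e N` are the configurations at the
beginnings of the iterations of an execution of dynA*, with `lab n` recording what
happened in iteration `n`. -/
def IsExec (reeval : Bool) (e : ℕ → AConfig S L I) (lab : ℕ → ALab S L) (N : ℕ) : Prop :=
  e 0 = initAConfig ts σh h ∧
  ∀ n < N, AStep ts σh h reeval (e n) (lab n) (.cont (e (n + 1)))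

/-- A state `s` is settled at iteration `n` if it was expanded in some earlier
iteration at whose beginning its stored g-value was `g*(s)`. -/
def SettledAt (e : ℕ → AConfig S L I) (lab : ℕ → ALab S L) (n : ℕ) (s : S) : Prop :=
  ∃ m < n, ∃ en : Entry S, lab m = .expand en ∧ en.1 = s ∧
    (gOf (e m) s : ℝ≥0∞) = ts.gstar s

/-- Iterated refinement of an information object on a fixed state. -/
def refIter (i : I) (s : S) : ℕ → I
  | 0 => i
  | n + 1 => σh.refine (refIter i s n) s

end DynAStar

/-! ## Auxiliary development for Statement 12 -/

section Aux

variable {S L I : Type} {ts : TransSys S L} {σh : InfoSource ts I} {h : S → I → ℝ≥0∞}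

lemma gOf_eq {c : AConfig S L I} {s : S} {g : NNReal} {p : Option (Tran S L)}
    (hp : c.par s = some (g, p)) : gOf c s = g := by
  simp only [gOf, hp, Option.map_some, Option.getD_some]

lemma parUpd_ne {par : S → Option (NNReal × Option (Tran S L))} {t : Tran S L} {x : S}
    (hx : x ≠ t.2.2) : parUpd ts par t x = par x := by
  simp [parUpd, hx]

lemma parUpd_src_none {par : S → Option (NNReal × Option (Tran S L))} {t : Tran S L}
    (h1 : par t.1 = none) : parUpd ts par t t.2.2 = par t.2.2 := by
  simp [parUpd, h1]

lemma parUpd_tgt {par : S → Option (NNReal × Option (Tran S L))} {t : Tran S L}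
    {g1 : NNReal} {p1 : Option (Tran S L)} (h1 : par t.1 = some (g1, p1)) :
    (par t.2.2 = none ∧ parUpd ts par t t.2.2 = some (g1 + ts.cost t.2.1, some t)) ∨
    (∃ go po, par t.2.2 = some (go, po) ∧
      ((g1 + ts.cost t.2.1 ≤ go ∧
          parUpd ts par t t.2.2 = some (g1 + ts.cost t.2.1, some t)) ∨
       (¬ g1 + ts.cost t.2.1 ≤ go ∧ parUpd ts par t t.2.2 = some (go, po)))) := by
  rcases h2 : par t.2.2 with _ | ⟨go, po⟩
  · left; exact ⟨rfl, by simp [parUpd, h1, h2]⟩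
  · right; refine ⟨go, po, rfl, ?_⟩
    by_cases hle : g1 + ts.cost t.2.1 ≤ go
    · exact Or.inl ⟨hle, by simp [parUpd, h1, h2, hle]⟩
    · exact Or.inr ⟨hle, by simp [parUpd, h1, h2, hle]⟩

/-- `parUpd` never increases stored g-values. -/
lemma parUpd_mono {par : S → Option (NNReal × Option (Tran S L))} {t : Tran S L} {x : S}
    {g : NNReal} {p : Option (Tran S L)} (hx : par x = some (g, p)) :
    ∃ g' p', parUpd ts par t x = some (g', p') ∧ g' ≤ g := by
  by_cases hxt : x = t.2.2
  · subst hxt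
    rcases h1 : par t.1 with _ | ⟨g1, p1⟩
    · exact ⟨g, p, by rw [parUpd_src_none h1, hx], le_rfl⟩
    · rcases parUpd_tgt (ts := ts) h1 with ⟨hn, _⟩ | ⟨go, po, hgo, ⟨hle, hu⟩ | ⟨hle, hu⟩⟩
      · rw [hx] at hn; cases hn
      · rw [hx] at hgo; cases hgo
        exact ⟨_, _, hu, hle⟩
      · rw [hx] at hgo; cases hgo
        exact ⟨_, _, hu, le_rfl⟩
  · exact ⟨g, p, by rw [parUpd_ne hxt, hx], le_rfl⟩

lemma parUpd_none {par : S → Option (NNReal × Option (Tran S L))} {t : Tran S L} {x : S}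
    (hx : parUpd ts par t x = none) : par x = none := by
  rcases hp : par x with _ | ⟨g, p⟩
  · rfl
  · obtain ⟨g', p', hu, -⟩ := parUpd_mono (ts := ts) (t := t) hp
    rw [hu] at hx; cases hx

/-- The target has a defined pair after `parUpd` whenever the source has one. -/
lemma parUpd_tgt_some {par : S → Option (NNReal × Option (Tran S L))} {t : Tran S L}
    {g1 : NNReal} {p1 : Option (Tran S L)} (h1 : par t.1 = some (g1, p1)) :
    ∃ g' p', parUpd ts par t t.2.2 = some (g', p') ∧ g' ≤ g1 + ts.cost t.2.1 := by
  rcases parUpd_tgt (ts := ts) h1 with ⟨hn, hu⟩ | ⟨go, po, hgo, ⟨hle, hu⟩ | ⟨hle, hu⟩⟩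
  · exact ⟨_, _, hu, le_rfl⟩
  · exact ⟨_, _, hu, le_rfl⟩
  · exact ⟨go, po, hu, le_of_not_ge hle⟩

/-- Case analysis for `procSucc`. -/
lemma procSucc_spec (c : AConfig S L I) (t : Tran S L) :
    (procSucc ts σh h c t).known = insert t.2.2 c.known ∧
    (procSucc ts σh h c t).par = parUpd ts c.par t ∧
    (procSucc ts σh h c t).info = σh.update c.info t ∧
    ((h t.2.2 (σh.update c.info t) = ⊤ ∧
        (procSucc ts σh h c t).closed = c.closed ∧
        (procSucc ts σh h c t).openq = c.openq) ∨
     (h t.2.2 (σh.update c.info t) ≠ ⊤ ∧ t.2.2 ∉ c.known ∧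
        (procSucc ts σh h c t).closed = c.closed ∧
        (procSucc ts σh h c t).openq =
          (t.2.2, ((parUpd ts c.par t t.2.2).map Prod.fst).getD 0,
            h t.2.2 (σh.update c.info t)) ::ₘ c.openq) ∨
     (h t.2.2 (σh.update c.info t) ≠ ⊤ ∧ t.2.2 ∈ c.known ∧
        ((parUpd ts c.par t t.2.2).map Prod.fst).getD 0 < gOf c t.2.2 ∧
        (procSucc ts σh h c t).closed = c.closed \ {t.2.2} ∧
        (procSucc ts σh h c t).openq =
          (t.2.2, ((parUpd ts c.par t t.2.2).map Prod.fst).getD 0,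
            h t.2.2 (σh.update c.info t)) ::ₘ c.openq) ∨
     (h t.2.2 (σh.update c.info t) ≠ ⊤ ∧ t.2.2 ∈ c.known ∧
        ¬ ((parUpd ts c.par t t.2.2).map Prod.fst).getD 0 < gOf c t.2.2 ∧
        (procSucc ts σh h c t).closed = c.closed ∧
        (procSucc ts σh h c t).openq = c.openq)) := by
  by_cases htop : h t.2.2 (σh.update c.info t) = ⊤
  · by_cases hk : t.2.2 ∈ c.known <;>
      refine ⟨?_, ?_, ?_, Or.inl ⟨htop, ?_, ?_⟩⟩ <;>
      simp [procSucc, htop, hk]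
  · by_cases hk : t.2.2 ∈ c.known
    · by_cases hlt :
        ((parUpd ts c.par t t.2.2).map Prod.fst).getD 0 < gOf c t.2.2
      · refine ⟨?_, ?_, ?_, Or.inr (Or.inr (Or.inl ⟨htop, hk, hlt, ?_, ?_⟩))⟩ <;>
          simp [procSucc, htop, hk, hlt]
      · refine ⟨?_, ?_, ?_, Or.inr (Or.inr (Or.inr ⟨htop, hk, hlt, ?_, ?_⟩))⟩ <;>
          simp [procSucc, htop, hk, hlt]
    · refine ⟨?_, ?_, ?_, Or.inr (Or.inl ⟨htop, hk, ?_, ?_⟩)⟩ <;>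
        simp [procSucc, htop, hk] <;> rfl

lemma gOf_procSucc_tgt (c : AConfig S L I) (t : Tran S L) :
    gOf (procSucc ts σh h c t) t.2.2 =
      ((parUpd ts c.par t t.2.2).map Prod.fst).getD 0 := by
  obtain ⟨-, hpar, -⟩ := procSucc_spec (ts := ts) (σh := σh) (h := h) c t
  simp [gOf, hpar]

/-! ### The global invariant -/

/-- The invariant maintained by dynA*; `E` is a set of states temporarily
excluded from the closed-expansion property (used while expanding a state). -/
structure AInv (ts : TransSys S L) (h₀ : S → ℝ≥0∞) (E : Set S)
    (c : AConfig S L I) : Prop where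
  parInit : ∃ p, c.par ts.init = some (0, p)
  parNone : ∀ s g, c.par s = some (g, none) → s = ts.init
  parSome : ∀ s g t, c.par s = some (g, some t) → t.2.2 = s ∧ t ∈ ts.trans ∧
      ∃ g1 p1, c.par t.1 = some (g1, p1) ∧ g1 + ts.cost t.2.1 ≤ g
  openH : ∀ en ∈ c.openq, en.2.2 = h₀ en.1
  openFin : ∀ en ∈ c.openq, en.2.2 ≠ ⊤
  openPar : ∀ en ∈ c.openq, ∃ g p, c.par en.1 = some (g, p) ∧ g ≤ en.2.1
  knownPar : ∀ s, s ∈ c.known ↔ c.par s ≠ none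
  openCover : ∀ s ∈ c.known, s ∉ c.closed → h₀ s ≠ ⊤ →
      ∃ en ∈ c.openq, en.1 = s ∧ en.2.1 ≤ gOf c s
  closedExp : ∀ s ∈ c.closed, s ∉ E → h₀ s ≠ ⊤ → ∀ t ∈ ts.trans, t.1 = s →
      t.2.2 ∈ c.known ∧ gOf c t.2.2 ≤ gOf c s + ts.cost t.2.1
  closedGoal : ∀ s ∈ c.closed, s ∉ ts.goal
  closedKnown : c.closed ⊆ c.known

variable {h₀ : S → ℝ≥0∞}

lemma procSucc_closed_subset (c : AConfig S L I) (t : Tran S L) :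
    (procSucc ts σh h c t).closed ⊆ c.closed := by
  obtain ⟨-, -, -, B⟩ := procSucc_spec (ts := ts) (σh := σh) (h := h) c t
  intro s hs
  rcases B with ⟨-, hC, -⟩ | ⟨-, -, hC, -⟩ | ⟨-, -, -, hC, -⟩ | ⟨-, -, -, hC, -⟩ <;>
      rw [hC] at hs
  exacts [hs, hs, hs.1, hs]

lemma procSucc_open_superset (c : AConfig S L I) (t : Tran S L) :
    ∀ en ∈ c.openq, en ∈ (procSucc ts σh h c t).openq := by
  obtain ⟨-, -, -, B⟩ := procSucc_spec (ts := ts) (σh := σh) (h := h) c t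
  rcases B with ⟨-, -, hO⟩ | ⟨-, -, -, hO⟩ | ⟨-, -, -, -, hO⟩ | ⟨-, -, -, -, hO⟩ <;>
    rw [hO] <;> intro en hen
  exacts [hen, Multiset.mem_cons_of_mem hen, Multiset.mem_cons_of_mem hen, hen]

lemma procSucc_par_mono {c : AConfig S L I} {t : Tran S L} {s : S} {g : NNReal}
    {p : Option (Tran S L)} (hs : c.par s = some (g, p)) :
    ∃ g' p', (procSucc ts σh h c t).par s = some (g', p') ∧ g' ≤ g := by
  obtain ⟨-, hP, -⟩ := procSucc_spec (ts := ts) (σh := σh) (h := h) c t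
  rw [hP]; exact parUpd_mono hs

lemma gOf_procSucc_mono {c : AConfig S L I} {t : Tran S L} {s : S}
    (hs : c.par s ≠ none) : gOf (procSucc ts σh h c t) s ≤ gOf c s := by
  rcases hp : c.par s with _ | ⟨g, p⟩
  · exact absurd hp hs
  · obtain ⟨g', p', hu, hle⟩ := procSucc_par_mono (ts := ts) (σh := σh) (h := h)
      (t := t) hp
    rw [gOf_eq hu, gOf_eq hp]; exact hle

lemma procSucc_par_ne {c : AConfig S L I} {t : Tran S L} {s : S} (hs : s ≠ t.2.2) :
    (procSucc ts σh h c t).par s = c.par s := by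
  obtain ⟨-, hP, -⟩ := procSucc_spec (ts := ts) (σh := σh) (h := h) c t
  rw [hP]; exact parUpd_ne hs

lemma gOf_procSucc_ne {c : AConfig S L I} {t : Tran S L} {s : S} (hs : s ≠ t.2.2) :
    gOf (procSucc ts σh h c t) s = gOf c s := by
  rw [gOf, procSucc_par_ne hs, gOf]

/-- While a state stays closed (and its heuristic value is finite), its
g-value does not change during `procSucc`. -/
lemma gOf_procSucc_closed (hstatic : ∀ (s : S) (i : I), h s i = h₀ s)
    {c : AConfig S L I}
    (hkp : ∀ s, s ∈ c.known ↔ c.par s ≠ none) (hck : c.closed ⊆ c.known)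
    {t : Tran S L} {s : S} (hs : s ∈ (procSucc ts σh h c t).closed)
    (hfin : h₀ s ≠ ⊤) : gOf (procSucc ts σh h c t) s = gOf c s := by
  by_cases hst : s = t.2.2
  · subst hst
    obtain ⟨-, hP, -, B⟩ := procSucc_spec (ts := ts) (σh := σh) (h := h) c t
    rcases B with ⟨htop, -, -⟩ | ⟨-, hk, -, -⟩ | ⟨-, -, -, hC, -⟩ | ⟨-, hk, hnlt, -, -⟩
    · rw [hstatic] at htop; exact absurd htop hfin
    · exact absurd ((hck (procSucc_closed_subset (h := h) c t hs) : _)) hk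
    · rw [hC] at hs; simp at hs
    · refine le_antisymm (gOf_procSucc_mono ((hkp t.2.2).mp hk)) (not_lt.mp ?_)
      rw [gOf_procSucc_tgt]; exact hnlt
  · exact gOf_procSucc_ne hst

/-- `procSucc` preserves the invariant. -/
lemma ainv_procSucc (hstatic : ∀ (s : S) (i : I), h s i = h₀ s) {E : Set S}
    {c : AConfig S L I} (hI : AInv ts h₀ E c) {t : Tran S L} (ht : t ∈ ts.trans)
    {g1 : NNReal} {p1 : Option (Tran S L)} (hp1 : c.par t.1 = some (g1, p1)) :
    AInv ts h₀ E (procSucc ts σh h c t) := by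
  obtain ⟨hK, hP, hInfo, B⟩ := procSucc_spec (ts := ts) (σh := σh) (h := h) c t
  set c' := procSucc ts σh h c t with hc'
  obtain ⟨gN, pN, hgN, hgNle⟩ : ∃ gN pN, c'.par t.2.2 = some (gN, pN) ∧
      gN ≤ g1 + ts.cost t.2.1 := by rw [hP]; exact parUpd_tgt_some hp1
  constructor
  · -- parInit
    obtain ⟨p, hp⟩ := hI.parInit
    obtain ⟨g', p', hu, hle⟩ := procSucc_par_mono (ts := ts) (σh := σh) (h := h)
      (t := t) hp
    exact ⟨p', by rwa [le_zero_iff.mp hle] at hu⟩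
  · -- parNone
    intro s g hsg
    by_cases hst : s = t.2.2
    · subst hst
      rw [hP] at hsg
      rcases parUpd_tgt (ts := ts) hp1 with ⟨-, hu⟩ | ⟨go, po, hgo, ⟨-, hu⟩ | ⟨-, hu⟩⟩
      · rw [hu] at hsg; cases hsg
      · rw [hu] at hsg; cases hsg
      · rw [hu] at hsg; injection hsg with hsg; cases hsg
        exact hI.parNone _ _ hgo
    · rw [procSucc_par_ne hst] at hsg; exact hI.parNone _ _ hsg
  · -- parSome
    intro s g u hsg
    have old : ∀ g' : NNReal, c.par s = some (g', some u) → g' ≤ g →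
        u.2.2 = s ∧ u ∈ ts.trans ∧
          ∃ ga pa, c'.par u.1 = some (ga, pa) ∧ ga + ts.cost u.2.1 ≤ g := by
      intro g' hold hle
      obtain ⟨h1, h2, ga, pa, hua, hule⟩ := hI.parSome _ _ _ hold
      obtain ⟨ga', pa', hua', hle'⟩ := procSucc_par_mono (ts := ts) (σh := σh)
        (h := h) (t := t) hua
      exact ⟨h1, h2, ga', pa', hua', le_trans (add_le_add_left hle' _)
        (le_trans hule hle)⟩
    by_cases hst : s = t.2.2
    · subst hst
      rw [hP] at hsg
      rcases parUpd_tgt (ts := ts) hp1 with ⟨hn, hu⟩ | ⟨go, po, hgo, ⟨hle, hu⟩ | ⟨-, hu⟩⟩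
      · rw [hu] at hsg
        injection hsg with hsg; injection hsg with h1 h2
        subst h1
        cases h2
        refine ⟨rfl, ht, ?_⟩
        by_cases h11 : t.1 = t.2.2
        · rw [h11, hn] at hp1; cases hp1
        · exact ⟨g1, p1, by rw [procSucc_par_ne h11]; exact hp1, le_rfl⟩
      · rw [hu] at hsg
        injection hsg with hsg; injection hsg with h1 h2
        subst h1
        injection h2 with h2; subst h2
        refine ⟨rfl, ht, ?_⟩
        by_cases h11 : t.1 = t.2.2
        · have ego : go = g1 := by
            rw [h11, hgo] at hp1
            injection hp1 with hp1'
            exact congrArg Prod.fst hp1'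
          have hc0 : ts.cost t.2.1 = 0 := by
            rw [ego] at hle
            exact le_zero_iff.mp ((add_le_iff_nonpos_right _).mp hle)
          refine ⟨g1 + ts.cost t.2.1, some t, ?_, by rw [hc0, add_zero]⟩
          rw [h11, hP]
          exact hu
        · exact ⟨g1, p1, by rw [procSucc_par_ne h11]; exact hp1, le_rfl⟩
      · rw [hu] at hsg
        injection hsg with hsg; injection hsg with e1 e2
        subst e1; cases e2
        exact old _ hgo le_rfl
    · rw [procSucc_par_ne hst] at hsg
      exact old _ hsg le_rfl
  · -- openH
    intro en hen
    rcases B with ⟨-, -, hO⟩ | ⟨-, -, -, hO⟩ | ⟨-, -, -, -, hO⟩ | ⟨-, -, -, -, hO⟩ <;>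
        rw [hO] at hen
    · exact hI.openH en hen
    · rcases Multiset.mem_cons.mp hen with rfl | hen
      · exact hstatic _ _
      · exact hI.openH en hen
    · rcases Multiset.mem_cons.mp hen with rfl | hen
      · exact hstatic _ _
      · exact hI.openH en hen
    · exact hI.openH en hen
  · -- openFin
    intro en hen
    rcases B with ⟨-, -, hO⟩ | ⟨htop, -, -, hO⟩ | ⟨htop, -, -, -, hO⟩ |
        ⟨-, -, -, -, hO⟩ <;> rw [hO] at hen
    · exact hI.openFin en hen
    · rcases Multiset.mem_cons.mp hen with rfl | hen
      · exact htop
      · exact hI.openFin en hen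
    · rcases Multiset.mem_cons.mp hen with rfl | hen
      · exact htop
      · exact hI.openFin en hen
    · exact hI.openFin en hen
  · -- openPar
    have hold : ∀ en ∈ c.openq, ∃ g p, c'.par en.1 = some (g, p) ∧ g ≤ en.2.1 := by
      intro en hen
      obtain ⟨g, p, hg, hle⟩ := hI.openPar en hen
      obtain ⟨g', p', hg', hle'⟩ := procSucc_par_mono (ts := ts) (σh := σh)
        (h := h) (t := t) hg
      exact ⟨g', p', hg', le_trans hle' hle⟩
    have hnew : ∃ g p, c'.par t.2.2 = some (g, p) ∧
        g ≤ ((parUpd ts c.par t t.2.2).map Prod.fst).getD 0 := by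
      refine ⟨gN, pN, hgN, le_of_eq ?_⟩
      rw [hP] at hgN
      rw [hgN, Option.map_some, Option.getD_some]
    intro en hen
    rcases B with ⟨-, -, hO⟩ | ⟨-, -, -, hO⟩ | ⟨-, -, -, -, hO⟩ | ⟨-, -, -, -, hO⟩ <;>
        rw [hO] at hen
    · exact hold en hen
    · rcases Multiset.mem_cons.mp hen with rfl | hen
      · exact hnew
      · exact hold en hen
    · rcases Multiset.mem_cons.mp hen with rfl | hen
      · exact hnew
      · exact hold en hen
    · exact hold en hen
  · -- knownPar
    intro s
    rw [hK]
    by_cases hst : s = t.2.2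
    · subst hst
      simp only [Set.mem_insert_iff, true_or, hgN, true_iff]
      simp [hgN]
    · rw [procSucc_par_ne hst]
      simp only [Set.mem_insert_iff, hst, false_or]
      exact hI.knownPar s
  · -- openCover
    intro s hs hncl hfin
    by_cases hst : s = t.2.2
    · subst hst
      rcases B with ⟨htop, -, -⟩ | ⟨-, -, -, hO⟩ | ⟨-, -, -, -, hO⟩ |
          ⟨-, hk, hnlt, hC, hO⟩
      · rw [hstatic] at htop; exact absurd htop hfin
      · refine ⟨(t.2.2, ((parUpd ts c.par t t.2.2).map Prod.fst).getD 0,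
          h t.2.2 (σh.update c.info t)), ?_, rfl, ?_⟩
        · rw [hO]; exact Multiset.mem_cons_self _ _
        · rw [gOf_procSucc_tgt]
      · refine ⟨(t.2.2, ((parUpd ts c.par t t.2.2).map Prod.fst).getD 0,
          h t.2.2 (σh.update c.info t)), ?_, rfl, ?_⟩
        · rw [hO]; exact Multiset.mem_cons_self _ _
        · rw [gOf_procSucc_tgt]
      · have hncl' : t.2.2 ∉ c.closed := by rwa [hC] at hncl
        obtain ⟨en, hen, he1, he2⟩ := hI.openCover t.2.2 hk hncl' hfin
        have hgle : gOf c t.2.2 ≤ gOf c' t.2.2 := by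
          rw [hc', gOf_procSucc_tgt]; exact not_lt.mp hnlt
        exact ⟨en, by rw [hO]; exact hen, he1, le_trans he2 hgle⟩
    · have hs' : s ∈ c.known := by
        rw [hK] at hs; rcases hs with rfl | hs; exact absurd rfl hst; exact hs
      have hncl' : s ∉ c.closed := by
        intro hcc
        rcases B with ⟨-, hC, -⟩ | ⟨-, -, hC, -⟩ | ⟨-, -, -, hC, -⟩ | ⟨-, -, -, hC, -⟩ <;>
          rw [hC] at hncl
        exacts [hncl hcc, hncl hcc, hncl ⟨hcc, hst⟩, hncl hcc]
      obtain ⟨en, hen, he1, he2⟩ := hI.openCover s hs' hncl' hfin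
      exact ⟨en, procSucc_open_superset (ts := ts) (σh := σh) (h := h) c t en hen,
        he1, by rwa [gOf_procSucc_ne hst]⟩
  · -- closedExp
    intro s hs hsE hfin u hu hu1
    have hsc : s ∈ c.closed := procSucc_closed_subset (h := h) c t hs
    obtain ⟨hk2, hle⟩ := hI.closedExp s hsc hsE hfin u hu hu1
    refine ⟨by rw [hK]; exact Set.mem_insert_of_mem _ hk2, ?_⟩
    have h1 : gOf c' u.2.2 ≤ gOf c u.2.2 :=
      gOf_procSucc_mono ((hI.knownPar u.2.2).mp hk2)
    have h2 : gOf c' s = gOf c s :=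
      gOf_procSucc_closed hstatic hI.knownPar hI.closedKnown hs hfin
    rw [h2]; exact le_trans h1 hle
  · -- closedGoal
    intro s hs
    exact hI.closedGoal s (procSucc_closed_subset (h := h) c t hs)
  · -- closedKnown
    intro s hs
    rw [hK]
    exact Set.mem_insert_of_mem _ (hI.closedKnown (procSucc_closed_subset (h := h) c t hs))

/-! ### Processed successors -/

/-- Transition `t` has been processed: its target is known and satisfies the
triangle property as long as the origin stays closed. -/
def Pfact (ts : TransSys S L) (h₀ : S → ℝ≥0∞) (c : AConfig S L I) (t : Tran S L) : Prop :=
  t.1 ∈ c.closed → h₀ t.1 ≠ ⊤ →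
    (t.2.2 ∈ c.known ∧ gOf c t.2.2 ≤ gOf c t.1 + ts.cost t.2.1)

lemma pfact_self {c : AConfig S L I} {t : Tran S L} {g1 : NNReal}
    {p1 : Option (Tran S L)} (hp1 : c.par t.1 = some (g1, p1)) :
    Pfact ts h₀ (procSucc ts σh h c t) t := by
  intro _ _
  obtain ⟨hK, hP, -⟩ := procSucc_spec (ts := ts) (σh := σh) (h := h) c t
  refine ⟨by rw [hK]; exact Set.mem_insert _ _, ?_⟩
  by_cases h11 : t.1 = t.2.2
  · rw [h11]; exact le_self_add
  · rw [gOf_procSucc_ne h11, gOf_eq hp1, gOf_procSucc_tgt]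
    obtain ⟨gN, pN, hu, hle⟩ := parUpd_tgt_some (ts := ts) hp1
    rw [hu, Option.map_some, Option.getD_some]
    exact hle

lemma pfact_mono (hstatic : ∀ (s : S) (i : I), h s i = h₀ s) {E : Set S}
    {c : AConfig S L I} (hI : AInv ts h₀ E c) {u t : Tran S L}
    (hPf : Pfact ts h₀ c t) : Pfact ts h₀ (procSucc ts σh h c u) t := by
  intro hcl hfin
  have hclc : t.1 ∈ c.closed := procSucc_closed_subset (h := h) c u hcl
  obtain ⟨hk2, hle⟩ := hPf hclc hfin
  refine ⟨by
    rw [(procSucc_spec (ts := ts) (σh := σh) (h := h) c u).1]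
    exact Set.mem_insert_of_mem _ hk2, ?_⟩
  have h1 : gOf (procSucc ts σh h c u) t.2.2 ≤ gOf c t.2.2 :=
    gOf_procSucc_mono ((hI.knownPar _).mp hk2)
  have h2 : gOf (procSucc ts σh h c u) t.1 = gOf c t.1 :=
    gOf_procSucc_closed hstatic hI.knownPar hI.closedKnown hcl hfin
  rw [h2]; exact le_trans h1 hle

/-- The main fold lemma: expanding all successors preserves the invariant and
establishes the processed-successor facts. -/
lemma expandAll_inv (hstatic : ∀ (s : S) (i : I), h s i = h₀ s) {E : Set S}
    {sstar : S} (l : List (Tran S L)) :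
    ∀ c : AConfig S L I, AInv ts h₀ E c → c.par sstar ≠ none →
      (∀ t ∈ l, t ∈ ts.trans ∧ t.1 = sstar) →
      AInv ts h₀ E (expandAll ts σh h c l) ∧
      (∀ t0 : Tran S L, Pfact ts h₀ c t0 →
        Pfact ts h₀ (expandAll ts σh h c l) t0) ∧
      (∀ t ∈ l, Pfact ts h₀ (expandAll ts σh h c l) t) := by
  induction l with
  | nil =>
    intro c hI hpar _
    exact ⟨hI, fun _ hp => hp, by simp⟩
  | cons t l ih =>
    intro c hI hpar hl
    obtain ⟨ht, ht1⟩ := hl t List.mem_cons_self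
    obtain ⟨g1, p1, hp1⟩ : ∃ g1 p1, c.par t.1 = some (g1, p1) := by
      rw [ht1]
      rcases hpc : c.par sstar with _ | ⟨g1, p1⟩
      · exact absurd hpc hpar
      · exact ⟨g1, p1, rfl⟩
    have hI' := ainv_procSucc (σh := σh) hstatic hI ht hp1
    have hpar' : (procSucc ts σh h c t).par sstar ≠ none := by
      rw [(procSucc_spec (ts := ts) (σh := σh) (h := h) c t).2.1]
      intro hn
      exact hpar (parUpd_none hn)
    have hfold := ih (procSucc ts σh h c t) hI' hpar'
      (fun u hu => hl u (List.mem_cons_of_mem _ hu))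
    have hexp : expandAll ts σh h c (t :: l) =
        expandAll ts σh h (procSucc ts σh h c t) l := rfl
    rw [hexp]
    refine ⟨hfold.1, ?_, ?_⟩
    · exact fun t0 hp => hfold.2.1 t0 (pfact_mono hstatic hI hp)
    · intro u hu
      rcases List.mem_cons.mp hu with rfl | hu
      · exact hfold.2.1 u (pfact_self hp1)
      · exact hfold.2.2 u hu

/-- Dropping the exclusion set once the expanded state is fully processed. -/
lemma ainv_weaken {sstar : S} {c : AConfig S L I} (hI : AInv ts h₀ {sstar} c)
    (hexp : ∀ u ∈ ts.trans, u.1 = sstar → Pfact ts h₀ c u) :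
    AInv ts h₀ ∅ c := by
  refine ⟨hI.parInit, hI.parNone, hI.parSome, hI.openH, hI.openFin, hI.openPar,
    hI.knownPar, hI.openCover, ?_, hI.closedGoal, hI.closedKnown⟩
  intro s hs _ hfin u hu hu1
  by_cases hss : s = sstar
  · subst hss
    rw [← hu1]
    exact hexp u hu hu1 (by rw [hu1]; exact hs) (by rw [hu1]; exact hfin)
  · exact hI.closedExp s hs (by simpa using hss) hfin u hu hu1

/-- One iteration of dynA* preserves the invariant. -/
lemma ainv_step (hstatic : ∀ (s : S) (i : I), h s i = h₀ s)
    {c c' : AConfig S L I} {la : ALab S L} {reeval : Bool}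
    (hI : AInv ts h₀ ∅ c) (hst : AStep ts σh h reeval c la (.cont c')) :
    AInv ts h₀ ∅ c' := by
  cases hst with
  | dup hq hmin hcl =>
    rename_i en rest
    refine ⟨hI.parInit, hI.parNone, hI.parSome, ?_, ?_, ?_, hI.knownPar, ?_,
      hI.closedExp, hI.closedGoal, hI.closedKnown⟩
    · exact fun e he => hI.openH e (hq ▸ Multiset.mem_cons_of_mem he)
    · exact fun e he => hI.openFin e (hq ▸ Multiset.mem_cons_of_mem he)
    · exact fun e he => hI.openPar e (hq ▸ Multiset.mem_cons_of_mem he)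
    · intro s hs hncl hfin
      obtain ⟨e, he, he1, he2⟩ := hI.openCover s hs hncl hfin
      rw [hq] at he
      rcases Multiset.mem_cons.mp he with rfl | he
      · exact absurd (he1 ▸ hcl) hncl
      · exact ⟨e, he, he1, he2⟩
  | reevFin hq hmin hncl hre hlt hfin =>
    rename_i en rest
    exfalso
    have hh := hI.openH en (hq ▸ Multiset.mem_cons_self _ _)
    rw [hstatic, ← hh] at hlt
    exact lt_irrefl _ hlt
  | reevInf hq hmin hncl hre hlt hfin =>
    rename_i en rest
    exfalso
    have hh := hI.openH en (hq ▸ Multiset.mem_cons_self _ _)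
    rw [hstatic, ← hh] at hlt
    exact lt_irrefl _ hlt
  | expand hq hmin hncl hnre hng hsucc =>
    rename_i en rest l
    obtain ⟨g, p, hg, -⟩ := hI.openPar en (hq ▸ Multiset.mem_cons_self _ _)
    set c0 : AConfig S L I :=
      { c with openq := rest, closed := insert en.1 c.closed,
               info := σh.refine c.info en.1 } with hc0
    have hI0 : AInv ts h₀ {en.1} c0 := by
      refine ⟨hI.parInit, hI.parNone, hI.parSome, ?_, ?_, ?_, hI.knownPar, ?_,
        ?_, ?_, ?_⟩
      · exact fun e he => hI.openH e (hq ▸ Multiset.mem_cons_of_mem he)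
      · exact fun e he => hI.openFin e (hq ▸ Multiset.mem_cons_of_mem he)
      · exact fun e he => hI.openPar e (hq ▸ Multiset.mem_cons_of_mem he)
      · intro s hs hncl' hfin
        have hs1 : s ≠ en.1 := fun hss => hncl' (hss ▸ Set.mem_insert _ _)
        have hnclc : s ∉ c.closed := fun hcc =>
          hncl' (Set.mem_insert_of_mem _ hcc)
        obtain ⟨e, he, he1, he2⟩ := hI.openCover s hs hnclc hfin
        rw [hq] at he
        rcases Multiset.mem_cons.mp he with rfl | he
        · exact absurd he1.symm hs1
        · exact ⟨e, he, he1, he2⟩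
      · intro s hs hsE hfin u hu hu1
        have hsc : s ∈ c.closed := by
          rcases Set.mem_insert_iff.mp hs with rfl | hs
          · exact absurd (Set.mem_singleton _) hsE
          · exact hs
        obtain ⟨h1, h2⟩ := hI.closedExp s hsc (Set.notMem_empty s) hfin u hu hu1
        exact ⟨h1, h2⟩
      · intro s hs
        rcases Set.mem_insert_iff.mp hs with rfl | hs
        · exact hng
        · exact hI.closedGoal s hs
      · intro s hs
        rcases Set.mem_insert_iff.mp hs with rfl | hs
        · exact (hI.knownPar en.1).mpr (by rw [hg]; exact Option.some_ne_none _)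
        · exact hI.closedKnown hs
    have hpar0 : c0.par en.1 ≠ none := by
      show c.par en.1 ≠ none
      rw [hg]; exact Option.some_ne_none _
    obtain ⟨hIF, -, hPF⟩ := expandAll_inv (ts := ts) (σh := σh) (h := h)
      hstatic l c0 hI0 hpar0 (fun t htl => ⟨((hsucc.2 t).mp htl).1, ((hsucc.2 t).mp htl).2⟩)
    exact ainv_weaken hIF (fun u hu hu1 => hPF u ((hsucc.2 u).mpr ⟨hu, hu1⟩))

/-- The initial configuration satisfies the invariant. -/
lemma ainv_init (hstatic : ∀ (s : S) (i : I), h s i = h₀ s) :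
    AInv ts h₀ ∅ (initAConfig ts σh h) := by
  constructor
  · exact ⟨none, by simp [initAConfig]⟩
  · intro s g hp
    by_cases hs : s = ts.init
    · exact hs
    · simp [initAConfig, hs] at hp
  · intro s g t hp
    by_cases hs : s = ts.init <;> simp [initAConfig, hs] at hp
  · intro en hen
    by_cases h0 : h ts.init σh.initInfo = ⊤ <;>
      simp [initAConfig, h0] at hen
    rw [hen]
    exact (hstatic _ _).symm ▸ hstatic _ _
  · intro en hen
    by_cases h0 : h ts.init σh.initInfo = ⊤ <;>
      simp [initAConfig, h0] at hen
    rw [hen]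
    exact h0
  · intro en hen
    by_cases h0 : h ts.init σh.initInfo = ⊤ <;>
      simp [initAConfig, h0] at hen
    rw [hen]
    exact ⟨0, none, by simp [initAConfig], le_rfl⟩
  · intro s
    by_cases hs : s = ts.init <;> simp [initAConfig, hs]
  · intro s hs hncl hfin
    have hs' : s = ts.init := by simpa [initAConfig] using hs
    subst hs'
    have h0 : ¬ h ts.init σh.initInfo = ⊤ := by rw [hstatic]; exact hfin
    refine ⟨(ts.init, 0, h ts.init σh.initInfo), ?_, rfl, ?_⟩
    · simp [initAConfig, h0]
    · simp [initAConfig, gOf]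
  · intro s hs
    simp [initAConfig] at hs
  · intro s hs
    simp [initAConfig] at hs
  · intro s hs
    simp [initAConfig] at hs

lemma ainv_exec (hstatic : ∀ (s : S) (i : I), h s i = h₀ s) {reeval : Bool}
    {e : ℕ → AConfig S L I} {lab : ℕ → ALab S L} {N : ℕ}
    (hexec : IsExec ts σh h reeval e lab N) :
    ∀ n, n ≤ N → AInv ts h₀ ∅ (e n) := by
  intro n
  induction n with
  | zero => intro _; rw [hexec.1]; exact ainv_init hstatic
  | succ m ihm =>
    intro hm
    exact ainv_step hstatic (ihm (le_of_lt (Nat.lt_of_succ_le hm)))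
      (hexec.2 m (Nat.lt_of_succ_le hm))

/-! ### Paths and parent chains -/

lemma isPathFrom_trans {s m e' : S} {π ρ : List (Tran S L)} :
    ts.IsPathFrom s π m → ts.IsPathFrom m ρ e' → ts.IsPathFrom s (π ++ ρ) e' := by
  intro h1
  induction h1 with
  | nil s => exact fun h2 => h2
  | cons ht _ ih => exact fun h2 => .cons ht (ih h2)

lemma isPathFrom_single {t : Tran S L} (ht : t ∈ ts.trans) :
    ts.IsPathFrom t.1 [t] t.2.2 :=
  TransSys.IsPathFrom.cons ht (.nil _)

lemma pathCost_append {π : List (Tran S L)} {t : Tran S L} :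
    ts.pathCost (π ++ [t]) = ts.pathCost π + ts.cost t.2.1 := by
  simp [TransSys.pathCost]

lemma pathCost_cons {π : List (Tran S L)} {t : Tran S L} :
    ts.pathCost (t :: π) = ts.cost t.2.1 + ts.pathCost π := by
  simp [TransSys.pathCost]

/-- Following parent pointers yields a path from the initial state whose cost
is bounded by the stored g-value. -/
lemma chain_path {c : AConfig S L I} (hI : AInv ts h₀ ∅ c) {s : S}
    {π : List (Tran S L)} (hch : ParentChain c.par s π) :
    ts.IsPathFrom ts.init π s ∧ ts.pathCost π ≤ gOf c s := by
  induction hch with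
  | nil hp =>
    have hini := hI.parNone _ _ hp
    subst hini
    exact ⟨.nil _, by simp [TransSys.pathCost]⟩
  | cons hp hch ih =>
    rename_i g t π
    obtain ⟨-, htr, g1, p1, hp1, hle⟩ := hI.parSome _ _ _ hp
    obtain ⟨hpath, hcost⟩ := ih
    refine ⟨isPathFrom_trans hpath (isPathFrom_single htr), ?_⟩
    rw [pathCost_append, gOf_eq hp]
    have hg1 : gOf c t.1 = g1 := gOf_eq hp1
    calc ts.pathCost π + ts.cost t.2.1 ≤ g1 + ts.cost t.2.1 := by
          exact add_le_add_left (hg1 ▸ hcost) _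
      _ ≤ g := hle

/-- The key bound: for every solution path, the open queue contains an entry
whose f-value is at most the cost of that path. -/
lemma open_fbound (hadm : ∀ s : S, h₀ s ≤ ts.hstar s) {c : AConfig S L I}
    (hI : AInv ts h₀ ∅ c) :
    ∀ {s sg : S} {ρ : List (Tran S L)}, ts.IsPathFrom s ρ sg → sg ∈ ts.goal →
      ∀ gacc : ℝ≥0∞, s ∈ c.known → (gOf c s : ℝ≥0∞) ≤ gacc →
      ∃ en ∈ c.openq, fval en ≤ gacc + (ts.pathCost ρ : ℝ≥0∞) := by
  intro s sg ρ hρ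
  induction hρ with
  | nil s =>
    intro hg gacc hk hga
    have hncl : s ∉ c.closed := fun hcc => hI.closedGoal s hcc hg
    have hh0 : h₀ s = 0 := by
      have h1 : ts.hstar s ≤ ((0 : NNReal) : ℝ≥0∞) :=
        sInf_le ⟨[], s, hg, .nil _, by simp [TransSys.pathCost]⟩
      simpa using le_trans (hadm s) h1
    obtain ⟨en, hen, he1, he2⟩ := hI.openCover s hk hncl
      (by rw [hh0]; exact ENNReal.zero_ne_top)
    refine ⟨en, hen, ?_⟩
    have hfv : fval en = (en.2.1 : ℝ≥0∞) := by
      rw [fval, hI.openH en hen, he1, hh0, add_zero]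
    rw [hfv]
    calc (en.2.1 : ℝ≥0∞) ≤ (gOf c s : ℝ≥0∞) := ENNReal.coe_le_coe.mpr he2
      _ ≤ gacc := hga
      _ ≤ gacc + _ := le_self_add
  | cons htr hrest ih =>
    rename_i s m e' l π
    intro hg gacc hk hga
    have hstarle : ts.hstar s ≤ (ts.pathCost ((s, l, m) :: π) : ℝ≥0∞) :=
      sInf_le ⟨(s, l, m) :: π, e', hg, .cons htr hrest, rfl⟩
    have hfin : h₀ s ≠ ⊤ := by
      intro htop
      have := le_trans (hadm s) hstarle
      rw [htop] at this
      exact ENNReal.coe_ne_top (top_le_iff.mp this)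
    have hcostc : (ts.pathCost ((s, l, m) :: π) : ℝ≥0∞) =
        (ts.cost l : ℝ≥0∞) + (ts.pathCost π : ℝ≥0∞) := by
      rw [pathCost_cons]; push_cast; rfl
    by_cases hcl : s ∈ c.closed
    · obtain ⟨hk2, hle2⟩ := hI.closedExp s hcl (Set.notMem_empty _) hfin
        (s, l, m) htr rfl
      have hga2 : (gOf c m : ℝ≥0∞) ≤ gacc + (ts.cost l : ℝ≥0∞) := by
        calc (gOf c m : ℝ≥0∞) ≤ ((gOf c s + ts.cost l : NNReal) : ℝ≥0∞) :=
              ENNReal.coe_le_coe.mpr hle2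
          _ = (gOf c s : ℝ≥0∞) + (ts.cost l : ℝ≥0∞) := by push_cast; rfl
          _ ≤ gacc + (ts.cost l : ℝ≥0∞) := add_le_add_left hga _
      obtain ⟨en, hen, hfv⟩ := ih hg (gacc + (ts.cost l : ℝ≥0∞)) hk2 hga2
      refine ⟨en, hen, ?_⟩
      rw [hcostc, ← add_assoc]
      exact hfv
    · obtain ⟨en, hen, he1, he2⟩ := hI.openCover s hk hcl hfin
      refine ⟨en, hen, ?_⟩
      have hfv : fval en = (en.2.1 : ℝ≥0∞) + h₀ s := by
        rw [fval, hI.openH en hen, he1]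
      rw [hfv]
      have h1 : (en.2.1 : ℝ≥0∞) ≤ gacc :=
        le_trans (ENNReal.coe_le_coe.mpr he2) hga
      have h2 : h₀ s ≤ (ts.pathCost ((s, l, m) :: π) : ℝ≥0∞) :=
        le_trans (hadm s) hstarle
      exact add_le_add h1 h2

end Aux

/-! ## Statement 12 -/


theorem stmt12 {S L I : Type} [Fintype S] [Fintype L]
    (ts : TransSys S L) (σh : InfoSource ts I) (h : S → I → ℝ≥0∞)
    (h₀ : S → ℝ≥0∞) (hadm₀ : ∀ s : S, h₀ s ≤ ts.hstar s)
    (hstatic : ∀ (s : S) (i : I), h s i = h₀ s) (reeval : Bool)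
    (e : ℕ → AConfig S L I) (lab : ℕ → ALab S L) (N : ℕ)
    (hexec : IsExec ts σh h reeval e lab N)
    (l : ALab S L) (π : List (Tran S L))
    (hret : AStep ts σh h reeval (e N) l (AOut.retPath π)) :
    ts.Solution π ∧ (ts.pathCost π : ℝ≥0∞) = ts.hstar ts.init := by
  have hIN : AInv ts h₀ ∅ (e N) := ainv_exec hstatic hexec N le_rfl
  cases hret with
  | retGoal hq hmin hncl hnre hgol hchain =>
    rename_i en rest
    obtain ⟨hpath, hcost⟩ := chain_path hIN hchain
    have hsol : ts.Solution π := ⟨en.1, hgol, hpath⟩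
    refine ⟨hsol, ?_⟩
    have hlow : ts.hstar ts.init ≤ (ts.pathCost π : ℝ≥0∞) :=
      sInf_le ⟨π, en.1, hgol, hpath, rfl⟩
    have henq : en ∈ (e N).openq := hq ▸ Multiset.mem_cons_self _ _
    obtain ⟨g, p, hg, hgle⟩ := hIN.openPar en henq
    have hup1 : (ts.pathCost π : ℝ≥0∞) ≤ fval en := by
      calc (ts.pathCost π : ℝ≥0∞) ≤ (gOf (e N) en.1 : ℝ≥0∞) :=
            ENNReal.coe_le_coe.mpr hcost
        _ = (g : ℝ≥0∞) := by rw [gOf_eq hg]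
        _ ≤ (en.2.1 : ℝ≥0∞) := ENNReal.coe_le_coe.mpr hgle
        _ ≤ fval en := le_self_add
    have hup2 : fval en ≤ ts.hstar ts.init := by
      apply le_sInf
      rintro b ⟨ρ, sg, hsg, hρ, rfl⟩
      have hik : ts.init ∈ (e N).known := by
        obtain ⟨pp, hpp⟩ := hIN.parInit
        exact (hIN.knownPar _).mpr (by rw [hpp]; exact Option.some_ne_none _)
      have hg0 : (gOf (e N) ts.init : ℝ≥0∞) ≤ 0 := by
        obtain ⟨pp, hpp⟩ := hIN.parInit
        rw [gOf_eq hpp]; simp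
      obtain ⟨en', hen', hfv⟩ := open_fbound hadm₀ hIN hρ hsg 0 hik hg0
      calc fval en ≤ fval en' := hmin en' hen'
        _ ≤ 0 + (ts.pathCost ρ : ℝ≥0∞) := hfv
        _ = (ts.pathCost ρ : ℝ≥0∞) := zero_add _
    exact le_antisymm (le_trans hup1 hup2) hlow
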